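/- Exact representation of the bias of the treated-quantile influence function: with h_θ(x) = G(θ|0,x), h_{0,θ}(x) = G₀(θ|0,x), π₀ = P₀(T=1), e₀(x) = P₀(T=1|X=x), one has E₀[D_{η,θ₀}] = -(1/(f(θ₀)π₀))·E₀[ ((1-e₀(X))·e(X)/(1-e(X)) - e₀(X))·(h_{0,θ₀}(X) - h_{θ₀}(X)) ], where θ₀ satisfies E₀[h_{0,θ₀}(X)·T]/π₀ = q. -/

import Mathlib

/-!
Every term of `D_{η,θ₀}` is a function of `X` on one of the events `{T = 0}`, `{T = 1}`,
`{Y ≤ θ₀}`, so its expectation is a finite sum over the values `x` of `X`, weighted by cell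
probabilities. In each cell `G₀ x · P(T = 0, X = x) = P(Y ≤ θ₀, T = 0, X = x)` and
`e₀ x · P(X = x) = P(T = 1, X = x)`, also when the denominators vanish, since the numerators
then vanish too. These identities turn the `x`-th summand of the expectation into the `x`-th
bias term plus `(G₀ x - q) · P(T = 1, X = x)`, and the definition of `θ₀` makes the latter
remainders sum to zero.
-/

open MeasureTheory

theorem measureReal_div_mul_cancel_of_subset {Ω : Type*} [MeasurableSpace Ω] {P : Measure Ω}
    [IsFiniteMeasure P] {s t : Set Ω} (hst : s ⊆ t) :
    P.real s / P.real t * P.real t = P.real s := by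
  rcases eq_or_ne (P.real t) 0 with ht | ht
  · rw [ht, mul_zero]
    exact (le_antisymm (ht ▸ measureReal_mono hst) measureReal_nonneg).symm
  · exact div_mul_cancel₀ _ ht

theorem measureReal_eq_add_of_eq_zero_or_eq_one {Ω : Type*} [MeasurableSpace Ω]
    {P : Measure Ω} [IsFiniteMeasure P] {T : Ω → ℕ} (hT : Measurable T)
    (hT01 : ∀ ω, T ω = 0 ∨ T ω = 1) {S : Set Ω} (hS : MeasurableSet S) :
    P.real S = P.real ({ω | T ω = 0} ∩ S) + P.real ({ω | T ω = 1} ∩ S) := by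
  have hdisj : Disjoint ({ω | T ω = 0} ∩ S) ({ω | T ω = 1} ∩ S) :=
    Set.disjoint_left.2 fun ω h0 h1 => by simp_all
  have hcover : {ω | T ω = 0} ∪ {ω | T ω = 1} = Set.univ := Set.eq_univ_of_forall hT01
  rw [← measureReal_union hdisj ((hT (measurableSet_singleton 1)).inter hS),
    ← Set.union_inter_distrib_right, hcover, Set.univ_inter]

theorem bias_cell_eq {e g g₀ e₀ q s a b n : ℝ} (hn : n = a + b) (hs : g₀ * a = s)
    (hb : e₀ * n = b) :
    ((1 - e₀) * e / (1 - e) - e₀) * (g₀ - g) * n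
      = e / (1 - e) * s - e / (1 - e) * g * a + (g - q) * b - (g₀ - q) * b := by
  subst hn
  linear_combination e / (1 - e) * hs - (e / (1 - e) + 1) * (g₀ - g) * hb

section FiniteValued

variable {Ω α : Type*} [MeasurableSpace Ω] [Fintype α] [MeasurableSpace α]
  [MeasurableSingletonClass α] {P : Measure Ω} [IsFiniteMeasure P] {X : Ω → α}

theorem setIntegral_comp_eq_sum (hX : Measurable X) (f : α → ℝ) (A : Set Ω) :
    ∫ ω in A, f (X ω) ∂P = ∑ x, f x * P.real (A ∩ {ω | X ω = x}) := by
  rw [← integral_map hX.aemeasurable (Measurable.of_discrete).aestronglyMeasurable,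
    integral_fintype Integrable.of_finite]
  refine Finset.sum_congr rfl fun x _ => ?_
  rw [map_measureReal_apply hX (measurableSet_singleton x),
    measureReal_restrict_apply (hX (measurableSet_singleton x)), smul_eq_mul, mul_comm,
    Set.inter_comm]
  rfl

theorem measureReal_eq_sum_inter_fiber (hX : Measurable X) (A : Set Ω) :
    P.real A = ∑ x, P.real (A ∩ {ω | X ω = x}) := by
  simpa using setIntegral_comp_eq_sum (P := P) hX (fun _ => 1) A

theorem integral_influence_eq_sum (hX : Measurable X) {A B C : Set Ω} (hA : MeasurableSet A)
    (hB : MeasurableSet B) (hC : MeasurableSet C) (c π : ℝ) (r g h : α → ℝ) :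
    ∫ ω, c * ((A.indicator (fun _ => (1 : ℝ)) ω / π) * r (X ω)
          * (B.indicator (fun _ => (1 : ℝ)) ω - g (X ω))
        + (C.indicator (fun _ => (1 : ℝ)) ω / π) * h (X ω)) ∂P
      = c * (π⁻¹ * ∑ x, (r x * P.real (B ∩ A ∩ {ω | X ω = x})
          - r x * g x * P.real (A ∩ {ω | X ω = x}) + h x * P.real (C ∩ {ω | X ω = x}))) := by
  have hsplit : ∀ ω, (A.indicator (fun _ => (1 : ℝ)) ω / π) * r (X ω)
        * (B.indicator (fun _ => (1 : ℝ)) ω - g (X ω))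
        + (C.indicator (fun _ => (1 : ℝ)) ω / π) * h (X ω)
      = π⁻¹ * ((B ∩ A).indicator (fun ω => r (X ω)) ω
          - A.indicator (fun ω => r (X ω) * g (X ω)) ω + C.indicator (fun ω => h (X ω)) ω) := by
    intro ω
    by_cases hωA : ω ∈ A <;> by_cases hωB : ω ∈ B <;> by_cases hωC : ω ∈ C <;>
      simp [hωA, hωB, hωC] <;> ring
  have hint : ∀ {S : Set Ω} (f : α → ℝ), MeasurableSet S →
      Integrable (S.indicator fun ω => f (X ω)) P :=
    fun _ hS => (Integrable.of_finite.comp_measurable hX).indicator hS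
  simp_rw [hsplit]
  rw [integral_const_mul, integral_const_mul, integral_add _ (hint h hC),
    integral_sub (hint r (hB.inter hA)) (hint (fun x => r x * g x) hA),
    integral_indicator (hB.inter hA), integral_indicator hA, integral_indicator hC,
    setIntegral_comp_eq_sum hX, setIntegral_comp_eq_sum hX (fun x => r x * g x),
    setIntegral_comp_eq_sum hX, ← Finset.sum_sub_distrib, ← Finset.sum_add_distrib]
  exact (hint r (hB.inter hA)).sub (hint (fun x => r x * g x) hA)

end FiniteValued

theorem stmt13_general {Ω α : Type*} [MeasurableSpace Ω] [Fintype α] [MeasurableSpace α]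
    [MeasurableSingletonClass α]
    (P : Measure Ω) [IsProbabilityMeasure P]
    (X : Ω → α) (T : Ω → ℕ) (Y : Ω → ℝ)
    (hX : Measurable X) (hT : Measurable T) (hYm : Measurable Y)
    (hT01 : ∀ ω, T ω = 0 ∨ T ω = 1)
    (θ₀ q fθ : ℝ)
    (e : α → ℝ) (G : α → ℝ)
    (e₀ G₀ : α → ℝ)
    (he₀ : ∀ x, e₀ x = (P ({ω | T ω = 1} ∩ {ω | X ω = x})).toReal
                        / (P {ω | X ω = x}).toReal)
    (hG₀ : ∀ x, G₀ x = (P ({ω | Y ω ≤ θ₀} ∩ {ω | T ω = 0} ∩ {ω | X ω = x})).toReal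
                        / (P ({ω | T ω = 0} ∩ {ω | X ω = x})).toReal)
    (hT1 : P {ω | T ω = 1} ≠ 0)
    -- θ₀ satisfies  E₀[h_{0,θ₀}(X)·T]/π₀ = q :
    (hθ₀ : (∑ x : α, G₀ x * (P ({ω | T ω = 1} ∩ {ω | X ω = x})).toReal)
              / (P {ω | T ω = 1}).toReal = q) :
    ∫ ω, -(1 / fθ)
        * ((Set.indicator {ω' | T ω' = 0} (fun _ => (1 : ℝ)) ω
                / (P {ω' | T ω' = 1}).toReal)
              * (e (X ω) / (1 - e (X ω)))
              * (Set.indicator {ω' | Y ω' ≤ θ₀} (fun _ => (1 : ℝ)) ω - G (X ω))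
            + (Set.indicator {ω' | T ω' = 1} (fun _ => (1 : ℝ)) ω
                / (P {ω' | T ω' = 1}).toReal)
              * (G (X ω) - q)) ∂P
      = -(1 / (fθ * (P {ω | T ω = 1}).toReal))
          * ∑ x : α,
              ((1 - e₀ x) * e x / (1 - e x) - e₀ x) * (G₀ x - G x)
                * (P {ω | X ω = x}).toReal := by
  simp only [← measureReal_def] at he₀ hG₀ hθ₀ ⊢
  have hG₀_mul : ∀ x, G₀ x * P.real ({ω | T ω = 0} ∩ {ω | X ω = x})
      = P.real ({ω | Y ω ≤ θ₀} ∩ {ω | T ω = 0} ∩ {ω | X ω = x}) := fun x => by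
    rw [hG₀]
    exact measureReal_div_mul_cancel_of_subset
      (Set.inter_subset_inter_left _ Set.inter_subset_right)
  have he₀_mul : ∀ x, e₀ x * P.real {ω | X ω = x}
      = P.real ({ω | T ω = 1} ∩ {ω | X ω = x}) := fun x => by
    rw [he₀]
    exact measureReal_div_mul_cancel_of_subset Set.inter_subset_right
  have hcenter : ∑ x, (G₀ x - q) * P.real ({ω | T ω = 1} ∩ {ω | X ω = x}) = 0 := by
    rw [div_eq_iff ((measureReal_ne_zero_iff (measure_ne_top P _)).2 hT1)] at hθ₀
    simp only [sub_mul, Finset.sum_sub_distrib, ← Finset.mul_sum,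
      ← measureReal_eq_sum_inter_fiber hX, hθ₀, sub_self]
  rw [integral_influence_eq_sum (A := {ω | T ω = 0}) (B := {ω | Y ω ≤ θ₀})
      (C := {ω | T ω = 1}) hX (hT (measurableSet_singleton 0)) (hYm measurableSet_Iic)
      (hT (measurableSet_singleton 1)) _ _
      (fun x => e x / (1 - e x)) G (fun x => G x - q),
    Fintype.sum_congr _ _ fun x => bias_cell_eq (q := q)
      (measureReal_eq_add_of_eq_zero_or_eq_one (S := {ω | X ω = x}) hT hT01
        (hX (measurableSet_singleton x))) (hG₀_mul x) (he₀_mul x),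
    Finset.sum_sub_distrib, hcenter]
  ring

/-- Exact representation of the bias of the treated-quantile influence
function:
`E₀[D_{η,θ₀}] = -(1/(f(θ₀)π₀))·E₀[((1-e₀)·e/(1-e) - e₀)·(h₀ - h)]`. -/
theorem stmt13 {Ω α : Type*} [MeasurableSpace Ω] [Fintype α] [MeasurableSpace α]
    [MeasurableSingletonClass α]
    (P : Measure Ω) [IsProbabilityMeasure P]
    (X : Ω → α) (T : Ω → ℕ) (Y₀ Y : Ω → ℝ)
    (hX : Measurable X) (hT : Measurable T) (hYm : Measurable Y)
    (hT01 : ∀ ω, T ω = 0 ∨ T ω = 1)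
    (hY : ∀ ω, T ω = 0 → Y ω = Y₀ ω)
    (θ₀ q fθ : ℝ) (hf : 0 < fθ)
    (e : α → ℝ) (G : α → ℝ)
    (he : ∀ x, e x ∈ Set.Ioo (0 : ℝ) 1) (hG : ∀ x, G x ∈ Set.Icc (0 : ℝ) 1)
    (e₀ G₀ : α → ℝ)
    (he₀ : ∀ x, e₀ x = (P ({ω | T ω = 1} ∩ {ω | X ω = x})).toReal
                        / (P {ω | X ω = x}).toReal)
    (hG₀ : ∀ x, G₀ x = (P ({ω | Y ω ≤ θ₀} ∩ {ω | T ω = 0} ∩ {ω | X ω = x})).toReal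
                        / (P ({ω | T ω = 0} ∩ {ω | X ω = x})).toReal)
    -- ignorability  T ⟂ Y₀ ∣ X  (for the event {Y₀ ≤ θ₀}):
    (hCI : ∀ x : α,
      P ({ω | Y₀ ω ≤ θ₀} ∩ {ω | T ω = 1} ∩ {ω | X ω = x})
          * P ({ω | T ω = 0} ∩ {ω | X ω = x})
        = P ({ω | Y₀ ω ≤ θ₀} ∩ {ω | T ω = 0} ∩ {ω | X ω = x})
            * P ({ω | T ω = 1} ∩ {ω | X ω = x}))
    (hpos0 : ∀ x : α, P {ω | X ω = x} ≠ 0 → P ({ω | T ω = 0} ∩ {ω | X ω = x}) ≠ 0)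
    (hT1 : P {ω | T ω = 1} ≠ 0)
    -- θ₀ satisfies  E₀[h_{0,θ₀}(X)·T]/π₀ = q :
    (hθ₀ : (∑ x : α, G₀ x * (P ({ω | T ω = 1} ∩ {ω | X ω = x})).toReal)
              / (P {ω | T ω = 1}).toReal = q) :
    ∫ ω, -(1 / fθ)
        * ((Set.indicator {ω' | T ω' = 0} (fun _ => (1 : ℝ)) ω
                / (P {ω' | T ω' = 1}).toReal)
              * (e (X ω) / (1 - e (X ω)))
              * (Set.indicator {ω' | Y ω' ≤ θ₀} (fun _ => (1 : ℝ)) ω - G (X ω))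
            + (Set.indicator {ω' | T ω' = 1} (fun _ => (1 : ℝ)) ω
                / (P {ω' | T ω' = 1}).toReal)
              * (G (X ω) - q)) ∂P
      = -(1 / (fθ * (P {ω | T ω = 1}).toReal))
          * ∑ x : α,
              ((1 - e₀ x) * e x / (1 - e x) - e₀ x) * (G₀ x - G x)
                * (P {ω | X ω = x}).toReal :=
  stmt13_general P X T Y hX hT hYm hT01 θ₀ q fθ e G e₀ G₀ he₀ hG₀ hT1 hθ₀
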